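/- If (μ_t) is non-decreasing in the WDS order and s ≤ t, then r_{μ_t} ≤ r_{μ_s}, where r_μ = inf{z : μ([z,∞)) = 0}. -/
import Mathlib


open MeasureTheory Set Filter

noncomputable def meanM (μ : Measure ℝ) : ℝ := ∫ y, y ∂μ

noncomputable def rSupE (μ : Measure ℝ) : EReal :=
  sInf ((fun z : ℝ => (z : EReal)) '' {z : ℝ | μ (Ici z) = 0})

noncomputable def psiWds (μ : Measure ℝ) (x : ℝ) : EReal :=
  if (x : EReal) < rSupE μ then
    ((((∫ y in Ici x, y ∂μ) - meanM μ) / (μ (Ici x)).toReal : ℝ) : EReal)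
  else ⊤

noncomputable def Kfun (μ : Measure ℝ) (x : ℝ) : ℝ :=
  (∫ y in Ici x, (y - x) ∂μ) - meanM μ

theorem stmt10 (μ : ℝ → Measure ℝ)
    (hprob : ∀ t, 0 ≤ t → IsProbabilityMeasure (μ t))
    (hint : ∀ t, 0 ≤ t → Integrable (fun y : ℝ => y) (μ t))
    (hneg : ∀ t, 0 ≤ t → meanM (μ t) < 0)
    (hwds : ∀ s t, 0 ≤ s → s ≤ t → ∀ x : ℝ, psiWds (μ s) x ≤ psiWds (μ t) x) :
    ∀ s t, 0 ≤ s → s ≤ t → rSupE (μ t) ≤ rSupE (μ s) := by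
  intro s t hs hst
  apply le_sInf
  rintro b ⟨z, hz, rfl⟩
  have h1 : rSupE (μ s) ≤ (z : EReal) := sInf_le ⟨z, hz, rfl⟩
  have h2 : psiWds (μ s) z = ⊤ := if_neg (not_lt.2 h1)
  have h3 : psiWds (μ t) z = ⊤ := top_le_iff.mp (h2 ▸ hwds s t hs hst z)
  by_contra hlt
  rw [psiWds, if_pos (not_le.mp hlt)] at h3
  exact (EReal.coe_ne_top _) h3
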